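/- The translated Casimir elements ĉ_q in U(so(n,C)) satisfy the quadratic identity 2ĉ_{2q+1} = −ĉ_{2q} + Σ_{p=0}^{2q} (−1)^p ĉ_{2q−p} ĉ_p for every q ≥ 0. In particular (q = 0), 2ĉ_1 = −ĉ_0 + ĉ_0², i.e. ĉ_1 = n(n−1)/2. -/

import Mathlib

/-- The iterated products `e_{ij}^q` in an associative algebra, `e_{ij}^0 = δ_{ij}`. -/
def epow {n : ℕ} {R : Type*} [Ring R] (e : Fin n → Fin n → R) : ℕ → Fin n → Fin n → R
  | 0, i, j => if i = j then 1 else 0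
  | q + 1, i, j => ∑ k : Fin n, e i k * epow e q k j

/-- The translated generators `ê_{ij} := e_{ij} + ((n−1)/2) δ_{ij}`. -/
noncomputable def ehat {n : ℕ} {R : Type*} [Ring R] [Algebra ℂ R]
    (e : Fin n → Fin n → R) (i j : Fin n) : R :=
  e i j + (((n : ℂ) - 1) / 2) • (if i = j then (1 : R) else 0)

/-- The translated Casimir elements `ĉ_q := Σ_i ê_{ii}^q`. -/
noncomputable def chat {n : ℕ} {R : Type*} [Ring R] [Algebra ℂ R]
    (e : Fin n → Fin n → R) (q : ℕ) : R :=
  ∑ i : Fin n, epow (ehat e) q i i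

/-! Write `Ê` for the matrix `(ê_ij)`. The commutation relations say that every power `Ê^q`
transforms under `[ê_kl, -]` like a 2-tensor of the vector representation, and `ê_ij + ê_ji =
(n - 1) δ_ij`. Moving `Ê` to the right past `Ê^q` therefore gives the recursion
`(Ê^(q+1))ᵀ = -(Ê^q)ᵀ Ê - Ê^q + ĉ_q`, which unwinds to a closed form of `(Ê^(q+1))ᵀ` in terms of
`Ê^(q+1)`, the products `ĉ_p Ê^(q-p)` and `Ê^q`. For `q` even the coefficient of `Ê^(q+1)` is `-1`,
so taking traces (which ignore the transpose) yields the quadratic relation; at `q = 0` it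
determines `ĉ_1` because `ĉ_0 = n`. -/

open Matrix Finset

section SoTensor

variable {ι R : Type*} [DecidableEq ι] [Ring R]

/-- The commutation relations of `so(n)` on generators `E k l` are `IsSoTensor E E`. -/
def IsSoTensor (E X : Matrix ι ι R) : Prop :=
  ∀ k l i j, E k l * X i j - X i j * E k l =
    (if k = i then X l j else 0) + (if k = j then X i l else 0)
      - (if i = l then X k j else 0) - (if l = j then X i k else 0)

variable {E X Y : Matrix ι ι R}

theorem IsSoTensor.one : IsSoTensor E 1 := by
  intro k l i j
  simp only [one_apply, mul_ite, ite_mul, mul_one, one_mul, mul_zero, zero_mul]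
  split_ifs <;> subst_vars <;> simp_all

theorem IsSoTensor.add (hX : IsSoTensor E X) (hY : IsSoTensor E Y) : IsSoTensor E (X + Y) := by
  intro k l i j
  calc E k l * (X + Y) i j - (X + Y) i j * E k l
      = (E k l * X i j - X i j * E k l) + (E k l * Y i j - Y i j * E k l) := by
        rw [Matrix.add_apply]; noncomm_ring
    _ = _ := by rw [hX, hY]; simp only [Matrix.add_apply]; split_ifs <;> abel

theorem IsSoTensor.smul {S : Type*} [CommSemiring S] [Algebra S R] (c : S) (hX : IsSoTensor E X) :
    IsSoTensor E (c • X) := by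
  intro k l i j
  simp only [Matrix.smul_apply, mul_smul_comm, smul_mul_assoc]
  rw [← smul_sub, hX k l i j]
  simp only [smul_sub, smul_add, smul_ite, smul_zero]

theorem IsSoTensor.add_smul_one_left {S : Type*} [CommSemiring S] [Algebra S R] (c : S)
    (hX : IsSoTensor E X) : IsSoTensor (E + c • 1) X := by
  intro k l i j
  have hc : ∀ r : R, (c • (1 : Matrix ι ι R)) k l * r = r * (c • (1 : Matrix ι ι R)) k l := by
    intro r
    simp only [Matrix.smul_apply, smul_mul_assoc, mul_smul_comm, one_apply]
    split_ifs <;> simp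
  rw [Matrix.add_apply, add_mul, mul_add, hc]
  convert hX k l i j using 1
  abel

variable [Fintype ι]

theorem IsSoTensor.mul (hX : IsSoTensor E X) (hY : IsSoTensor E Y) : IsSoTensor E (X * Y) := by
  intro k l i j
  have hLeibniz : ∀ m, E k l * (X i m * Y m j) - X i m * Y m j * E k l
      = (E k l * X i m - X i m * E k l) * Y m j + X i m * (E k l * Y m j - Y m j * E k l) := by
    intro m; noncomm_ring
  simp only [mul_apply, mul_sum, sum_mul]
  rw [← sum_sub_distrib]
  simp only [hLeibniz, hX _ _ _ _, hY _ _ _ _]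
  simp only [add_mul, sub_mul, mul_add, mul_sub, ite_mul, mul_ite, zero_mul, mul_zero,
    sum_add_distrib, sum_sub_distrib, sum_ite_irrel,
    sum_const_zero, sum_ite_eq, sum_ite_eq', mem_univ, if_true]
  abel

theorem IsSoTensor.pow (hX : IsSoTensor E X) (q : ℕ) : IsSoTensor E (X ^ q) := by
  induction q with
  | zero => exact pow_zero X ▸ IsSoTensor.one
  | succ q ih => exact pow_succ X q ▸ ih.mul hX

theorem IsSoTensor.transpose_mul (hE : Eᵀ = ((Fintype.card ι : R) - 1) • 1 - E)
    (hX : IsSoTensor E X) : (E * X)ᵀ = -(Xᵀ * E) - X + X.trace • 1 := by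
  ext i j
  have hEjk : ∀ k, E j k = ((Fintype.card ι : R) - 1) * (if k = j then 1 else 0) - E k j := by
    intro k
    simpa [one_apply] using congrFun (congrFun hE k) j
  have hcomm : ∀ k, E k j * X k i = X k i * E k j + (X j i + (if k = i then X k j else 0)
      - (if k = j then X k i else 0) - (if j = i then X k k else 0)) := by
    intro k; have := hX k j k i; rw [if_pos rfl] at this; rw [← this]; abel
  simp only [transpose_apply, mul_apply, hEjk, sub_mul, sum_sub_distrib, hcomm, mul_assoc,
    ite_mul, one_mul, zero_mul, mul_ite, mul_zero]
  simp only [sum_add_distrib, sum_sub_distrib, sum_ite_eq',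
    mem_univ, if_true, sum_const, card_univ, Matrix.add_apply,
    Matrix.sub_apply, Matrix.neg_apply, mul_apply, transpose_apply, Matrix.smul_apply, one_apply,
    smul_eq_mul, mul_ite, mul_one, mul_zero, trace, Matrix.diag, sum_ite_irrel,
    nsmul_eq_mul]
  rcases eq_or_ne i j with rfl | hij
  · simp only [if_true]; abel
  · simp only [if_neg hij, if_neg hij.symm]; abel

theorem IsSoTensor.transpose_pow_succ (h : IsSoTensor E E)
    (hE : Eᵀ = ((Fintype.card ι : R) - 1) • 1 - E) (q : ℕ) :
    (E ^ (q + 1))ᵀ = (-1 : ℤ) ^ (q + 1) • E ^ (q + 1)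
      + ∑ p ∈ range (q + 1), (-1 : ℤ) ^ (q - p) • ((E ^ p).trace • E ^ (q - p))
      - if Even q then E ^ q else 0 := by
  have hrec : ∀ m, (E ^ (m + 1))ᵀ = -((E ^ m)ᵀ * E) - E ^ m + (E ^ m).trace • 1 := fun m => by
    rw [pow_succ']; exact (h.pow m).transpose_mul hE
  induction q with
  | zero =>
    rw [hrec]
    simp only [pow_zero, transpose_one, one_mul, trace_one, zero_add, pow_one, neg_smul, one_smul,
      range_one, zero_tsub, sum_singleton, Even.zero, if_true]
    abel
  | succ q ih =>
    have hsum : ∑ p ∈ range (q + 2), (-1 : ℤ) ^ (q + 1 - p) • ((E ^ p).trace • E ^ (q + 1 - p))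
        = -∑ p ∈ range (q + 1), (-1 : ℤ) ^ (q - p) • ((E ^ p).trace • E ^ (q - p + 1))
          + (E ^ (q + 1)).trace • 1 := by
      rw [sum_range_succ, Nat.sub_self, pow_zero, pow_zero, one_smul, ← sum_neg_distrib]
      congr 1
      refine sum_congr rfl fun p hp => ?_
      rw [show q + 1 - p = q - p + 1 by have := mem_range.mp hp; omega, pow_succ,
        mul_neg_one, neg_smul]
    have hEven : (if Even (q + 1) then E ^ (q + 1) else 0)
        = E ^ (q + 1) - if Even q then E ^ (q + 1) else 0 := by
      by_cases hq : Even q <;> simp [hq, Nat.even_add_one]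
    rw [hrec, ih, hsum, hEven, pow_succ (-1 : ℤ) (q + 1), mul_neg_one, neg_smul]
    simp only [add_mul, sub_mul, smul_mul_assoc, sum_mul, ite_mul, zero_mul, ← pow_succ]
    abel

theorem IsSoTensor.two_nsmul_trace_pow_odd (h : IsSoTensor E E)
    (hE : Eᵀ = ((Fintype.card ι : R) - 1) • 1 - E) (q : ℕ) :
    2 • (E ^ (2 * q + 1)).trace = -(E ^ (2 * q)).trace
      + ∑ p ∈ range (2 * q + 1), (-1 : ℤ) ^ p • ((E ^ (2 * q - p)).trace * (E ^ p).trace) := by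
  have key := congrArg trace (h.transpose_pow_succ hE (2 * q))
  simp only [trace_transpose, trace_neg, trace_add, trace_sub, trace_smul, trace_sum, smul_eq_mul,
    if_pos (even_two_mul q), Odd.neg_one_pow (odd_two_mul_add_one q), neg_one_smul] at key
  have hreflect :
      ∑ p ∈ range (2 * q + 1), (-1 : ℤ) ^ (2 * q - p) • ((E ^ p).trace * (E ^ (2 * q - p)).trace)
      = ∑ p ∈ range (2 * q + 1), (-1 : ℤ) ^ p • ((E ^ (2 * q - p)).trace * (E ^ p).trace) := by
    rw [← sum_range_reflect]
    refine sum_congr rfl fun p hp => ?_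
    have := mem_range.mp hp
    rw [show 2 * q + 1 - 1 - p = 2 * q - p by omega, show 2 * q - (2 * q - p) = p by omega]
  rw [← hreflect, two_nsmul]
  nth_rewrite 1 [key]
  abel

end SoTensor

section Casimir

variable {n : ℕ} {R : Type*} [Ring R]

theorem of_epow (f : Fin n → Fin n → R) (q : ℕ) : of (epow f q) = of f ^ q := by
  induction q with
  | zero => ext i j; simp [epow, one_apply]
  | succ q ih => ext i j; rw [pow_succ', mul_apply, ← ih]; rfl

variable [Algebra ℂ R] (e : Fin n → Fin n → R)

theorem chat_eq_trace (q : ℕ) : chat e q = (of (ehat e) ^ q).trace := by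
  rw [← of_epow]; rfl

theorem chat_zero : chat e 0 = n := by
  simp [chat, epow]

theorem of_ehat : of (ehat e) = of e + (((n : ℂ) - 1) / 2) • 1 := by
  ext i j; simp [ehat, one_apply]

theorem isSoTensor_of_ehat (he : IsSoTensor (of e) (of e)) :
    IsSoTensor (of (ehat e)) (of (ehat e)) := by
  rw [of_ehat]
  exact (he.add (IsSoTensor.one.smul _)).add_smul_one_left _

theorem transpose_of_ehat (hskew : ∀ i j, e i j = -e j i) :
    (of (ehat e))ᵀ = ((Fintype.card (Fin n) : R) - 1) • 1 - of (ehat e) := by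
  ext i j
  rcases eq_or_ne i j with rfl | hij
  · have hhalf : ((n : R) - 1) = (((n : ℂ) - 1) / 2) • 1 + (((n : ℂ) - 1) / 2) • 1 := by
      rw [← add_smul, add_halves, sub_smul, one_smul, Nat.cast_smul_eq_nsmul, nsmul_one]
    simp only [transpose_apply, of_apply, ehat, Matrix.sub_apply, Matrix.smul_apply, one_apply,
      if_true, smul_eq_mul, mul_one, Fintype.card_fin]
    rw [hhalf]
    nth_rewrite 1 [hskew i i]
    abel
  · simp [ehat, one_apply, hskew j i, hij, hij.symm]

end Casimir

theorem stmt9_general {n : ℕ} {R : Type*} [Ring R] [Algebra ℂ R] (e : Fin n → Fin n → R)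
    (hskew : ∀ i j, e i j = - e j i)
    (hcomm : ∀ k l i j, e k l * e i j - e i j * e k l =
      (if k = i then e l j else 0) + (if k = j then e i l else 0)
        - (if i = l then e k j else 0) - (if l = j then e i k else 0)) :
    (∀ q : ℕ, (2 : ℂ) • chat e (2 * q + 1) =
        - chat e (2 * q) +
          ∑ p ∈ Finset.range (2 * q + 1), ((-1 : ℂ) ^ p) • (chat e (2 * q - p) * chat e p)) ∧
    ((2 : ℂ) • chat e 1 = - chat e 0 + chat e 0 * chat e 0) ∧
    (chat e 1 = (((n : ℂ) * ((n : ℂ) - 1)) / 2) • (1 : R)) := by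
  have hodd : ∀ q : ℕ, (2 : ℂ) • chat e (2 * q + 1) = - chat e (2 * q) +
      ∑ p ∈ Finset.range (2 * q + 1), ((-1 : ℂ) ^ p) • (chat e (2 * q - p) * chat e p) := by
    intro q
    rw [two_smul, ← two_nsmul]
    simp only [chat_eq_trace]
    rw [(isSoTensor_of_ehat e hcomm).two_nsmul_trace_pow_odd (transpose_of_ehat e hskew)]
    simp only [← Int.cast_smul_eq_zsmul ℂ, Int.cast_pow, Int.cast_neg, Int.cast_one]
  have hone : (2 : ℂ) • chat e 1 = - chat e 0 + chat e 0 * chat e 0 := by simpa using hodd 0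
  refine ⟨hodd, hone, ?_⟩
  calc chat e 1 = (2 : ℂ)⁻¹ • (2 : ℂ) • chat e 1 := by rw [inv_smul_smul₀ two_ne_zero]
    _ = _ := by
      rw [hone, chat_zero]
      simp only [Algebra.smul_def, mul_one, ← map_natCast (algebraMap ℂ R), ← map_neg, ← map_mul,
        ← map_add]
      congr 1
      ring

/-- The translated Casimir elements satisfy
`2 ĉ_{2q+1} = −ĉ_{2q} + Σ_{p=0}^{2q} (−1)^p ĉ_{2q−p} ĉ_p` for every `q ≥ 0`; in particular
(`q = 0`) `2 ĉ_1 = −ĉ_0 + ĉ_0²`, i.e. `ĉ_1 = n(n−1)/2`. -/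
theorem stmt9 {n : ℕ} {R : Type*} [Ring R] [Algebra ℂ R] (e : Fin n → Fin n → R)
    (hskew : ∀ i j, e i j = - e j i)
    (hdiag : ∀ i, e i i = 0)
    (hcomm : ∀ k l i j, e k l * e i j - e i j * e k l =
      (if k = i then e l j else 0) + (if k = j then e i l else 0)
        - (if i = l then e k j else 0) - (if l = j then e i k else 0)) :
    (∀ q : ℕ, (2 : ℂ) • chat e (2 * q + 1) =
        - chat e (2 * q) +
          ∑ p ∈ Finset.range (2 * q + 1), ((-1 : ℂ) ^ p) • (chat e (2 * q - p) * chat e p)) ∧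
    ((2 : ℂ) • chat e 1 = - chat e 0 + chat e 0 * chat e 0) ∧
    (chat e 1 = (((n : ℂ) * ((n : ℂ) - 1)) / 2) • (1 : R)) :=
  stmt9_general e hskew hcomm
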